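/- arXiv:2312.13638 — 6 statements merged into one kernel-verified Lean document; each statement's English description precedes it below -/
import Mathlib

section
/- Let G be a cubic graph and M = {M₁, M₂, M₃} three perfect matchings of G with M₁ ∩ M₂ ∩ M₃ = ∅. Then the core of M (the subgraph formed by the edges lying in 0 or 2 of the matchings) is 2-regular on its vertex set, i.e., every vertex incident with a core edge is incident with exactly two core edges. -/
/-!
At a vertex `v` of a cubic graph each of the three perfect matchings uses exactly one of the
three edges at `v`, so the coverages of these edges sum to `3`. No edge lies in all three
matchings, so each coverage is at most `2`, and the only such decompositions of `3` are
`1 + 1 + 1` and `0 + 1 + 2`. If some edge at `v` is a core edge, the first is excluded, and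
the second has exactly two core edges.
-/

open Finset

def SimpleGraph.IsCubic {V : Type*} [Fintype V] (G : SimpleGraph V)
    [DecidableRel G.Adj] : Prop :=
  ∀ v : V, G.degree v = 3

def SimpleGraph.IsPM {V : Type*} (G : SimpleGraph V) (M : Finset (Sym2 V)) : Prop :=
  (↑M ⊆ G.edgeSet) ∧ ∀ v : V, ∃! e, e ∈ M ∧ v ∈ e

def cov {V : Type*} [DecidableEq V] (M₁ M₂ M₃ : Finset (Sym2 V)) (e : Sym2 V) : ℕ :=
  (if e ∈ M₁ then 1 else 0) + (if e ∈ M₂ then 1 else 0) + (if e ∈ M₃ then 1 else 0)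

namespace SimpleGraph

variable {V : Type*} [Fintype V] [DecidableEq V] {G : SimpleGraph V} [DecidableRel G.Adj]

theorem IsPM.card_incidenceFinset_filter_mem {M : Finset (Sym2 V)} (hM : G.IsPM M) (v : V) :
    #((G.incidenceFinset v).filter (· ∈ M)) = 1 := by
  obtain ⟨e, ⟨heM, hve⟩, huniq⟩ := hM.2 v
  rw [card_eq_one]
  refine ⟨e, ?_⟩
  ext f
  simp only [incidenceFinset_eq_filter, mem_filter, mem_edgeFinset, mem_singleton]
  constructor
  · rintro ⟨⟨-, hvf⟩, hfM⟩
    exact huniq f ⟨hfM, hvf⟩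
  · rintro rfl
    exact ⟨⟨hM.1 heM, hve⟩, heM⟩

theorem sum_cov_incidenceFinset {M₁ M₂ M₃ : Finset (Sym2 V)}
    (h₁ : G.IsPM M₁) (h₂ : G.IsPM M₂) (h₃ : G.IsPM M₃) (v : V) :
    ∑ e ∈ G.incidenceFinset v, cov M₁ M₂ M₃ e = 3 := by
  simp only [cov, sum_add_distrib, ← card_filter, h₁.card_incidenceFinset_filter_mem,
    h₂.card_incidenceFinset_filter_mem, h₃.card_incidenceFinset_filter_mem]

end SimpleGraph

theorem cov_le_two {V : Type*} [DecidableEq V] {M₁ M₂ M₃ : Finset (Sym2 V)}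
    (h : M₁ ∩ M₂ ∩ M₃ = ∅) (e : Sym2 V) : cov M₁ M₂ M₃ e ≤ 2 := by
  have : ¬(e ∈ M₁ ∧ e ∈ M₂ ∧ e ∈ M₃) := fun he ↦ by
    simpa [h] using mem_inter.2 ⟨mem_inter.2 ⟨he.1, he.2.1⟩, he.2.2⟩
  unfold cov
  split_ifs <;> simp_all

theorem card_filter_eq_zero_or_eq_two_of_sum_eq_three {α : Type*} {s : Finset α} {f : α → ℕ}
    (hs : #s = 3) (hle : ∀ a ∈ s, f a ≤ 2) (hsum : ∑ a ∈ s, f a = 3)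
    (hex : ∃ a ∈ s, f a = 0 ∨ f a = 2) :
    #(s.filter fun a ↦ f a = 0 ∨ f a = 2) = 2 := by
  classical
  obtain ⟨a, b, c, hab, hac, hbc, rfl⟩ := card_eq_three.1 hs
  simp only [mem_insert, mem_singleton, forall_eq_or_imp, forall_eq, exists_eq_or_imp,
    exists_eq_left] at hle hex
  have hne : a ∉ ({b, c} : Finset α) ∧ b ∉ ({c} : Finset α) := by simp [hab, hac, hbc]
  rw [sum_insert hne.1, sum_insert hne.2, sum_singleton] at hsum
  rw [card_filter, sum_insert hne.1, sum_insert hne.2, sum_singleton]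
  split_ifs <;> omega

theorem core_two_regular {V : Type*} [Fintype V] [DecidableEq V]
    (G : SimpleGraph V) [DecidableRel G.Adj] (hG : G.IsCubic)
    (M₁ M₂ M₃ : Finset (Sym2 V)) (h₁ : G.IsPM M₁) (h₂ : G.IsPM M₂) (h₃ : G.IsPM M₃)
    (hreg : M₁ ∩ M₂ ∩ M₃ = ∅) (v : V)
    (hv : ∃ e ∈ G.edgeFinset, v ∈ e ∧ (cov M₁ M₂ M₃ e = 0 ∨ cov M₁ M₂ M₃ e = 2)) :
    (G.edgeFinset.filter
      (fun f => v ∈ f ∧ (cov M₁ M₂ M₃ f = 0 ∨ cov M₁ M₂ M₃ f = 2))).card = 2 := by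
  rw [← filter_filter, ← G.incidenceFinset_eq_filter]
  refine card_filter_eq_zero_or_eq_two_of_sum_eq_three ?_ (fun e _ ↦ cov_le_two hreg e)
    (G.sum_cov_incidenceFinset h₁ h₂ h₃ v) ?_
  · rw [G.card_incidenceFinset_eq_degree, hG v]
  · obtain ⟨e, he, hve, hcore⟩ := hv
    exact ⟨e, G.incidenceFinset_eq_filter v ▸ mem_filter.2 ⟨he, hve⟩, hcore⟩
end

section
/- Let G be a cubic graph that is not 3-edge-colourable (a snark). Then for every collection of three perfect matchings M₁, M₂, M₃ of G, at least 3 edges of G are left uncovered, i.e., |E(G) \ (M₁ ∪ M₂ ∪ M₃)| ≥ 3. Hence the defect df(G) of any snark is at least 3. -/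
open Finset

def SimpleGraph.IsProper3EdgeColouring {V : Type*} (G : SimpleGraph V)
    (σ : Sym2 V → ZMod 2 × ZMod 2) : Prop :=
  (∀ e ∈ G.edgeSet, σ e ≠ 0) ∧
  ∀ e ∈ G.edgeSet, ∀ f ∈ G.edgeSet, e ≠ f → ∀ v : V, v ∈ e → v ∈ f → σ e ≠ σ f

/-- A 2-connected graph: connected, and still connected after deleting any vertex. -/
def SimpleGraph.TwoConnected {V : Type*} (G : SimpleGraph V) : Prop :=
  G.Connected ∧ ∀ v : V, (G.induce {u | u ≠ v}).Connected

/-- A snark: a 2-connected cubic graph with no proper 3-edge-colouring. -/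
def SimpleGraph.IsSnark {V : Type*} [Fintype V] (G : SimpleGraph V)
    [DecidableRel G.Adj] : Prop :=
  G.IsCubic ∧ G.TwoConnected ∧
    ¬ ∃ σ : Sym2 V → ZMod 2 × ZMod 2, G.IsProper3EdgeColouring σ

/-
At every vertex of a cubic graph the three incident edges together lie in exactly three of the
matchings, counted with multiplicity. An edge lying in all three matchings therefore forces the
four edges next to it to be uncovered. Otherwise an uncovered edge `ab` meets, at `a` and at `b`,
edges `aa'` and `bb'` lying in two matchings each, and at `a'` and `b'` these force further
uncovered edges. If there are at most two uncovered edges, these coincide, so the uncovered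
edges are exactly `ab` and `a'b'`. Some matching contains both `aa'` and `bb'`, and switching it
along the 4-cycle `a b b' a'` gives three perfect matchings covering every edge, that is, a
3-edge-colouring.
-/

theorem Finset.eq_of_card_le_two {α : Type*} {s : Finset α} {a b c : α} (hs : #s ≤ 2)
    (ha : a ∈ s) (hb : b ∈ s) (hc : c ∈ s) (hab : a ≠ b) (hac : a ≠ c) : b = c := by
  by_contra hbc
  exact absurd (two_lt_card.2 ⟨a, ha, b, hb, c, hc, hab, hac, hbc⟩) (by omega)

section CoverMult

variable {α ι : Type*} [DecidableEq α] {M : ι → Finset α} {e f : α}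

def coverMult [Fintype ι] (M : ι → Finset α) (e : α) : ℕ := #{i | e ∈ M i}

variable [Fintype ι]

theorem coverMult_le_card (M : ι → Finset α) (e : α) :
    coverMult M e ≤ Fintype.card ι :=
  card_le_univ _

theorem coverMult_eq_zero_iff : coverMult M e = 0 ↔ ∀ i, e ∉ M i := by
  simp [coverMult, filter_eq_empty_iff]

theorem exists_ne_mem_of_one_lt_coverMult (he : 1 < coverMult M e) (i : ι) :
    ∃ j ≠ i, e ∈ M j := by
  obtain ⟨j, hj, hji⟩ := exists_mem_ne he i
  exact ⟨j, hji, (mem_filter.1 hj).2⟩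

theorem exists_mem_mem_of_coverMult_eq_two {M : Fin 3 → Finset α}
    (he : coverMult M e = 2) (hf : coverMult M f = 2) : ∃ i, e ∈ M i ∧ f ∈ M i := by
  let S : Finset (Fin 3) := {i | e ∈ M i}
  let T : Finset (Fin 3) := {i | f ∈ M i}
  have hunion : #(S ∪ T) + #(S ∩ T) = #S + #T := card_union_add_card_inter S T
  have hle : #(S ∪ T) ≤ 3 := card_le_univ (S ∪ T)
  obtain ⟨i, hi⟩ : (S ∩ T).Nonempty := by
    rw [← card_pos]
    change #S = 2 at he
    change #T = 2 at hf
    omega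
  simp only [S, T, mem_inter, mem_filter, mem_univ, true_and] at hi
  exact ⟨i, hi⟩

end CoverMult

namespace SimpleGraph

variable {V : Type*} {G : SimpleGraph V}

namespace IsPM

variable {M : Finset (Sym2 V)}

theorem eq_of_mem_of_mem (hM : G.IsPM M) {v : V} {e f : Sym2 V} (he : e ∈ M) (hf : f ∈ M)
    (hve : v ∈ e) (hvf : v ∈ f) : e = f :=
  (hM.2 v).unique ⟨he, hve⟩ ⟨hf, hvf⟩

theorem sdiff_union [DecidableEq V] (hM : G.IsPM M) {R N : Finset (Sym2 V)} (hRM : R ⊆ M)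
    (hN : ↑N ⊆ G.edgeSet) (hNR : ∀ v, (∃ n ∈ N, v ∈ n) ↔ ∃ r ∈ R, v ∈ r)
    (hN_unique : ∀ v, ∀ n₁ ∈ N, ∀ n₂ ∈ N, v ∈ n₁ → v ∈ n₂ → n₁ = n₂) :
    G.IsPM (M \ R ∪ N) := by
  refine ⟨fun e he => ?_, fun v => ?_⟩
  · rcases mem_union.1 he with he | he
    exacts [hM.1 (mem_sdiff.1 he).1, hN he]
  by_cases hv : ∃ n ∈ N, v ∈ n
  · obtain ⟨n, hn, hvn⟩ := hv
    refine ⟨n, ⟨mem_union_right _ hn, hvn⟩, fun e ⟨he, hve⟩ => ?_⟩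
    rcases mem_union.1 he with he | he
    · obtain ⟨heM, heR⟩ := mem_sdiff.1 he
      obtain ⟨r, hr, hvr⟩ := (hNR v).1 ⟨n, hn, hvn⟩
      exact absurd (hM.eq_of_mem_of_mem heM (hRM hr) hve hvr ▸ hr) heR
    · exact hN_unique v e he n hn hve hvn
  · obtain ⟨m, ⟨hm, hvm⟩, huniq⟩ := hM.2 v
    have hmR : m ∉ R := fun hmR => hv ((hNR v).2 ⟨m, hmR, hvm⟩)
    refine ⟨m, ⟨mem_union_left _ (mem_sdiff.2 ⟨hm, hmR⟩), hvm⟩, fun e ⟨he, hve⟩ => ?_⟩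
    rcases mem_union.1 he with he | he
    exacts [huniq e ⟨(mem_sdiff.1 he).1, hve⟩, absurd ⟨e, he, hve⟩ hv]

theorem card_filter_neighborFinset [Fintype V] [DecidableEq V] [DecidableRel G.Adj]
    (hM : G.IsPM M) (v : V) : #{w ∈ G.neighborFinset v | s(v, w) ∈ M} = 1 := by
  obtain ⟨e, ⟨he, hve⟩, huniq⟩ := hM.2 v
  obtain ⟨w, rfl⟩ : ∃ w, e = s(v, w) := ⟨Sym2.Mem.other hve, (Sym2.other_spec hve).symm⟩
  refine card_eq_one.2 ⟨w, ext fun x => ?_⟩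
  simp only [mem_filter, mem_neighborFinset, mem_singleton]
  refine ⟨fun ⟨_, hx⟩ => Sym2.congr_right.1 (huniq _ ⟨hx, Sym2.mem_mk_left v x⟩), ?_⟩
  rintro rfl
  exact ⟨hM.1 he, he⟩

end IsPM

theorem exists_isProper3EdgeColouring_of_cover {M : Fin 3 → Finset (Sym2 V)}
    (hM : ∀ i, G.IsPM (M i)) (hcover : ∀ e ∈ G.edgeSet, ∃ i, e ∈ M i) :
    ∃ σ, G.IsProper3EdgeColouring σ := by
  classical
  let c : Fin 3 → ZMod 2 × ZMod 2 := ![(1, 0), (0, 1), (1, 1)]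
  have hc₀ : ∀ i, c i ≠ 0 := by decide
  have hc : Function.Injective c := by decide
  refine ⟨fun e => if h : ∃ i, e ∈ M i then c h.choose else 0, fun e he => ?_,
    fun e he f hf hef v hve hvf hσ => ?_⟩
  · simp only [dif_pos (hcover e he), ne_eq, hc₀, not_false_eq_true]
  · simp only [dif_pos (hcover e he), dif_pos (hcover f hf)] at hσ
    have hfe : f ∈ M (hcover e he).choose := hc hσ ▸ (hcover f hf).choose_spec
    exact hef ((hM _).eq_of_mem_of_mem (hcover e he).choose_spec hfe hve hvf)

theorem exists_isProper3EdgeColouring_of_four_cycle [DecidableEq V] {M : Fin 3 → Finset (Sym2 V)}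
    (hM : ∀ i, G.IsPM (M i)) {a b a' b' : V}
    (hab : G.Adj a b) (ha'b' : G.Adj a' b') (hab' : a ≠ b') (ha'b : a' ≠ b)
    (ha : coverMult M s(a, a') = 2) (hb : coverMult M s(b, b') = 2)
    (hcover : ∀ e ∈ G.edgeSet, e ≠ s(a, b) → e ≠ s(a', b') → ∃ i, e ∈ M i) :
    ∃ σ, G.IsProper3EdgeColouring σ := by
  obtain ⟨i, hai, hbi⟩ := exists_mem_mem_of_coverMult_eq_two ha hb
  have haa' : G.Adj a a' := (hM i).1 hai
  have hbb' : G.Adj b b' := (hM i).1 hbi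
  let R : Finset (Sym2 V) := {s(a, a'), s(b, b')}
  let N : Finset (Sym2 V) := {s(a, b), s(a', b')}
  have hdisj : ∀ v, v ∈ s(a, b) → v ∉ s(a', b') := by
    intro v hv hv'
    rw [Sym2.mem_iff] at hv hv'
    rcases hv with h₁ | h₁ <;> rcases hv' with h₂ | h₂
    exacts [haa'.ne (h₁.symm.trans h₂), hab' (h₁.symm.trans h₂), ha'b (h₂.symm.trans h₁),
      hbb'.ne (h₁.symm.trans h₂)]
  have hswitch : G.IsPM (M i \ R ∪ N) := by
    refine (hM i).sdiff_union (by simp [R, insert_subset_iff, hai, hbi])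
      (by simp [N, Set.insert_subset_iff, hab, ha'b']) (fun v => ?_) ?_
    · simp only [R, N, mem_insert, mem_singleton, exists_eq_or_imp, exists_eq_left,
        Sym2.mem_iff]
      tauto
    · simp only [N, mem_insert, mem_singleton]
      rintro v _ (rfl | rfl) _ (rfl | rfl) h₁ h₂
      exacts [rfl, (hdisj v h₁ h₂).elim, (hdisj v h₂ h₁).elim, rfl]
  refine exists_isProper3EdgeColouring_of_cover (M := Function.update M i (M i \ R ∪ N))
    (fun j => ?_) (fun e he => ?_)
  · rcases eq_or_ne j i with rfl | hj
    · simpa using hswitch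
    · simpa [hj] using hM j
  by_cases heN : e ∈ N
  · exact ⟨i, by simp [heN]⟩
  by_cases heR : e ∈ R
  · obtain ⟨j, hji, hj⟩ : ∃ j ≠ i, e ∈ M j := by
      simp only [R, mem_insert, mem_singleton] at heR
      rcases heR with rfl | rfl
      exacts [exists_ne_mem_of_one_lt_coverMult (by omega) i,
        exists_ne_mem_of_one_lt_coverMult (by omega) i]
    exact ⟨j, by simpa [hji] using hj⟩
  simp only [N, mem_insert, mem_singleton, not_or] at heN
  obtain ⟨j, hj⟩ := hcover e he heN.1 heN.2
  rcases eq_or_ne j i with rfl | hji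
  · exact ⟨j, by simp [hj, heR]⟩
  · exact ⟨j, by simpa [hji] using hj⟩



section Counting

variable [Fintype V] [DecidableEq V] [DecidableRel G.Adj] {ι : Type*} [Fintype ι]
  {M : ι → Finset (Sym2 V)} {v w x : V}

theorem sum_coverMult_neighborFinset (hM : ∀ i, G.IsPM (M i)) (v : V) :
    ∑ w ∈ G.neighborFinset v, coverMult M s(v, w) = Fintype.card ι := by
  simp only [coverMult, card_filter]
  rw [sum_comm]
  simp only [← card_filter, (hM _).card_filter_neighborFinset, sum_const, card_univ,
    smul_eq_mul, mul_one]

theorem coverMult_add_coverMult_le (hM : ∀ i, G.IsPM (M i)) (hw : G.Adj v w) (hx : G.Adj v x)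
    (hwx : w ≠ x) : coverMult M s(v, w) + coverMult M s(v, x) ≤ Fintype.card ι := by
  rw [← sum_coverMult_neighborFinset hM v, ← sum_pair (f := fun y => coverMult M s(v, y)) hwx]
  exact sum_le_sum_of_subset (by simp [insert_subset_iff, hw, hx])

end Counting


section Cubic

variable [Fintype V] [DecidableEq V] [DecidableRel G.Adj] {M : Fin 3 → Finset (Sym2 V)}
  {u v w : V}

def uncoveredEdges (G : SimpleGraph V) [DecidableRel G.Adj] (M : Fin 3 → Finset (Sym2 V)) :
    Finset (Sym2 V) :=
  {e ∈ G.edgeFinset | coverMult M e = 0}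

@[simp]
theorem mem_uncoveredEdges {e : Sym2 V} :
    e ∈ G.uncoveredEdges M ↔ e ∈ G.edgeSet ∧ coverMult M e = 0 := by
  simp [uncoveredEdges]

theorem coverMult_add_sum_erase (hM : ∀ i, G.IsPM (M i)) (hw : G.Adj v w) :
    coverMult M s(v, w) + ∑ x ∈ (G.neighborFinset v).erase w, coverMult M s(v, x) = 3 := by
  rw [add_sum_erase _ (fun x => coverMult M s(v, x)) ((G.mem_neighborFinset v w).2 hw),
    sum_coverMult_neighborFinset hM, Fintype.card_fin]

theorem card_neighborFinset_erase (hG : G.IsCubic) (hw : G.Adj v w) :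
    #((G.neighborFinset v).erase w) = 2 := by
  rw [card_erase_of_mem ((G.mem_neighborFinset v w).2 hw), card_neighborFinset_eq_degree, hG v]

theorem exists_adj_coverMult_eq_two (hG : G.IsCubic) (hM : ∀ i, G.IsPM (M i))
    (hw : G.Adj v w) (h0 : coverMult M s(v, w) = 0)
    (hle : ∀ x, G.Adj v x → coverMult M s(v, x) ≤ 2) :
    ∃ x, G.Adj v x ∧ coverMult M s(v, x) = 2 := by
  by_contra! h
  have hsum := coverMult_add_sum_erase hM hw
  have hbound := sum_le_card_nsmul ((G.neighborFinset v).erase w) (fun x => coverMult M s(v, x))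
    1 fun x hx => by
      have hvx := (G.mem_neighborFinset v x).1 (mem_of_mem_erase hx)
      have := hle x hvx
      have := h x hvx
      omega
  rw [card_neighborFinset_erase hG hw] at hbound
  simp only [smul_eq_mul, mul_one] at hbound
  omega

theorem exists_adj_coverMult_eq_zero (hG : G.IsCubic) (hM : ∀ i, G.IsPM (M i))
    (hw : G.Adj v w) (h2 : coverMult M s(v, w) = 2) :
    ∃ x, G.Adj v x ∧ coverMult M s(v, x) = 0 := by
  by_contra! h
  have hsum := coverMult_add_sum_erase hM hw
  have hbound := card_nsmul_le_sum ((G.neighborFinset v).erase w) (fun x => coverMult M s(v, x))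
    1 fun x hx =>
      Nat.one_le_iff_ne_zero.2 (h x ((G.mem_neighborFinset v x).1 (mem_of_mem_erase hx)))
  rw [card_neighborFinset_erase hG hw] at hbound
  simp only [smul_eq_mul, mul_one] at hbound
  omega

theorem four_le_card_uncoveredEdges (hG : G.IsCubic) (hM : ∀ i, G.IsPM (M i))
    (huw : G.Adj u w) (h3 : coverMult M s(u, w) = 3) : 4 ≤ #(G.uncoveredEdges M) := by
  let others (v w : V) : Finset (Sym2 V) := ((G.neighborFinset v).erase w).image (s(v, ·))
  have hsub : ∀ {v w}, G.Adj v w → coverMult M s(v, w) = 3 →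
      others v w ⊆ G.uncoveredEdges M := by
    intro v w hvw h3
    simp only [others, subset_iff, mem_image, mem_erase, mem_neighborFinset]
    rintro _ ⟨x, ⟨hxw, hvx⟩, rfl⟩
    refine mem_filter.2 ⟨mem_edgeFinset.2 hvx, ?_⟩
    have := coverMult_add_coverMult_le hM hvw hvx hxw.symm
    rw [Fintype.card_fin] at this
    omega
  have hcard : ∀ {v w}, G.Adj v w → #(others v w) = 2 := fun hvw => by
    rw [card_image_of_injective _ fun _ _ => Sym2.congr_right.1,
      card_neighborFinset_erase hG hvw]
  have hdisj : Disjoint (others u w) (others w u) := by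
    simp only [others, Finset.disjoint_left, mem_image, mem_erase, not_exists, not_and]
    rintro _ ⟨x, ⟨hxw, -⟩, rfl⟩ y - h
    rcases Sym2.eq_iff.1 h with ⟨h, -⟩ | ⟨h, -⟩
    exacts [huw.ne h.symm, hxw h.symm]
  calc 4 = #(others u w ∪ others w u) := by
        rw [card_union_of_disjoint hdisj, hcard huw, hcard huw.symm]
    _ ≤ #(G.uncoveredEdges M) :=
        card_le_card (union_subset (hsub huw h3) (hsub huw.symm (by rwa [Sym2.eq_swap])))

theorem coverMult_le_two_of_card_uncoveredEdges_le_two (hG : G.IsCubic)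
    (hM : ∀ i, G.IsPM (M i)) (hU : #(G.uncoveredEdges M) ≤ 2) (huw : G.Adj u w) :
    coverMult M s(u, w) ≤ 2 := by
  by_contra! h
  have := four_le_card_uncoveredEdges hG hM huw (le_antisymm (coverMult_le_card ..) h)
  omega

theorem exists_isProper3EdgeColouring_of_card_uncoveredEdges_le_two (hG : G.IsCubic)
    (hM : ∀ i, G.IsPM (M i)) (hU : #(G.uncoveredEdges M) ≤ 2) :
    ∃ σ, G.IsProper3EdgeColouring σ := by
  obtain hU₀ | ⟨e, he⟩ := (G.uncoveredEdges M).eq_empty_or_nonempty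
  · refine exists_isProper3EdgeColouring_of_cover hM fun e he => ?_
    by_contra! h
    simpa [hU₀] using mem_uncoveredEdges.2 ⟨he, coverMult_eq_zero_iff.2 h⟩
  induction e with | h a b => ?_
  obtain ⟨hab, hab0⟩ := mem_uncoveredEdges.1 he
  rw [mem_edgeSet] at hab
  have hle : ∀ {x y}, G.Adj x y → coverMult M s(x, y) ≤ 2 :=
    coverMult_le_two_of_card_uncoveredEdges_le_two hG hM hU
  obtain ⟨a', haa', ha'⟩ := exists_adj_coverMult_eq_two hG hM hab hab0 fun _ => hle
  obtain ⟨b', hbb', hb'⟩ :=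
    exists_adj_coverMult_eq_two hG hM hab.symm (by rwa [Sym2.eq_swap]) fun _ => hle
  obtain ⟨c, ha'c, hc⟩ := exists_adj_coverMult_eq_zero hG hM haa'.symm (by rwa [Sym2.eq_swap])
  obtain ⟨d, hb'd, hd⟩ := exists_adj_coverMult_eq_zero hG hM hbb'.symm (by rwa [Sym2.eq_swap])
  have ha'b : a' ≠ b := by rintro rfl; omega
  have hb'a : b' ≠ a := by rintro rfl; rw [Sym2.eq_swap] at hb'; omega
  have ha'b' : a' ≠ b' := by
    rintro rfl
    have := coverMult_add_coverMult_le hM haa'.symm hbb'.symm hab.ne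
    rw [Sym2.eq_swap, Fintype.card_fin] at this
    rw [Sym2.eq_swap] at hb'
    omega
  have hne₁ : s(a, b) ≠ s(a', c) := by simp [haa'.ne, ha'b.symm]
  have hne₂ : s(a, b) ≠ s(b', d) := by simp [hb'a.symm, hbb'.ne]
  have hcd : s(a', c) = s(b', d) :=
    eq_of_card_le_two hU he (mem_uncoveredEdges.2 ⟨ha'c, hc⟩) (mem_uncoveredEdges.2 ⟨hb'd, hd⟩)
      hne₁ hne₂
  obtain rfl : c = b' := by
    rcases Sym2.eq_iff.1 hcd with ⟨h, -⟩ | ⟨-, h⟩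
    exacts [absurd h ha'b', h]
  refine exists_isProper3EdgeColouring_of_four_cycle hM hab ha'c hb'a.symm ha'b ha' hb'
    fun e he' heab hea'b' => ?_
  by_contra! h
  exact hea'b' (eq_of_card_le_two hU he (mem_uncoveredEdges.2 ⟨ha'c, hc⟩)
    (mem_uncoveredEdges.2 ⟨he', coverMult_eq_zero_iff.2 h⟩) hne₁ heab.symm).symm

end Cubic

end SimpleGraph

theorem snark_at_least_three_uncovered {V : Type*} [Fintype V] [DecidableEq V]
    (G : SimpleGraph V) [DecidableRel G.Adj] (hG : G.IsSnark)
    (M₁ M₂ M₃ : Finset (Sym2 V)) (h₁ : G.IsPM M₁) (h₂ : G.IsPM M₂) (h₃ : G.IsPM M₃) :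
    3 ≤ (G.edgeFinset.filter (fun e => e ∉ M₁ ∧ e ∉ M₂ ∧ e ∉ M₃)).card := by
  let M : Fin 3 → Finset (Sym2 V) := ![M₁, M₂, M₃]
  have hM : ∀ i, G.IsPM (M i) := by
    intro i
    fin_cases i
    exacts [h₁, h₂, h₃]
  have hU : G.edgeFinset.filter (fun e => e ∉ M₁ ∧ e ∉ M₂ ∧ e ∉ M₃) = G.uncoveredEdges M := by
    ext e
    simp [SimpleGraph.uncoveredEdges, coverMult_eq_zero_iff, Fin.forall_fin_succ, M]
  by_contra! h
  rw [hU] at h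
  exact hG.2.2 (G.exists_isProper3EdgeColouring_of_card_uncoveredEdges_le_two hG.1 hM (by omega))
end

section
/- For every snark G that admits at least one regular 3-array, rdf(G) = 3 if and only if df(G) = 3. -/
open Finset

/-- The (colouring) defect: the minimum number of edges left uncovered by three
perfect matchings. -/
noncomputable def SimpleGraph.defect {V : Type*} [Fintype V] [DecidableEq V]
    (G : SimpleGraph V) [DecidableRel G.Adj] : ℕ :=
  sInf {k | ∃ M₁ M₂ M₃ : Finset (Sym2 V), G.IsPM M₁ ∧ G.IsPM M₂ ∧ G.IsPM M₃ ∧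
    (G.edgeFinset.filter (fun e => e ∉ M₁ ∧ e ∉ M₂ ∧ e ∉ M₃)).card = k}

/-- The regular defect: the minimum number of edges left uncovered by three
perfect matchings with empty intersection. -/
noncomputable def SimpleGraph.regDefect {V : Type*} [Fintype V] [DecidableEq V]
    (G : SimpleGraph V) [DecidableRel G.Adj] : ℕ :=
  sInf {k | ∃ M₁ M₂ M₃ : Finset (Sym2 V), G.IsPM M₁ ∧ G.IsPM M₂ ∧ G.IsPM M₃ ∧
    M₁ ∩ M₂ ∩ M₃ = ∅ ∧
    (G.edgeFinset.filter (fun e => e ∉ M₁ ∧ e ∉ M₂ ∧ e ∉ M₃)).card = k}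

/-! In a cubic graph, an edge lying in all three perfect matchings forces its four neighbouring
edges to be uncovered. So a 3-array leaving at most three edges uncovered is regular, and the
sets minimised by `defect` and `regDefect` agree up to 3. -/

theorem Nat.sInf_eq_iff_isLeast {s : Set ℕ} {n : ℕ} (hn : n ≠ 0) : sInf s = n ↔ IsLeast s n := by
  refine ⟨fun h => ?_, IsLeast.csInf_eq⟩
  have hs : s.Nonempty := Set.nonempty_iff_ne_empty.2 fun hs => hn (by simp [← h, hs])
  exact ⟨h ▸ Nat.sInf_mem hs, fun k hk => h ▸ Nat.sInf_le hk⟩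

theorem Nat.sInf_eq_iff_sInf_eq_of_subset {A B : Set ℕ} {n : ℕ} (hn : n ≠ 0) (hBA : B ⊆ A)
    (hAB : ∀ k ∈ A, k ≤ n → k ∈ B) : sInf B = n ↔ sInf A = n := by
  rw [Nat.sInf_eq_iff_isLeast hn, Nat.sInf_eq_iff_isLeast hn]
  refine ⟨fun hB => ⟨hBA hB.1, fun k hk => ?_⟩,
    fun hA => ⟨hAB n hA.1 le_rfl, fun k hk => hA.2 (hBA hk)⟩⟩
  by_contra! hkn
  exact (hB.2 (hAB k hk hkn.le)).not_gt hkn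

namespace SimpleGraph

variable {V : Type*} {G : SimpleGraph V}

theorem IsPM.notMem_of_mem_of_ne {M : Finset (Sym2 V)} (hM : G.IsPM M) {v : V} {e f : Sym2 V}
    (he : e ∈ M) (hve : v ∈ e) (hvf : v ∈ f) (hfe : f ≠ e) : f ∉ M :=
  fun hf => hfe ((hM.2 v).unique ⟨hf, hvf⟩ ⟨he, hve⟩)

variable [Fintype V] [DecidableEq V] [DecidableRel G.Adj]

theorem card_incidenceFinset_union_erase_of_adj {u v : V} (h : G.Adj u v) :
    #((G.incidenceFinset u ∪ G.incidenceFinset v).erase s(u, v)) = G.degree u + G.degree v - 2 := by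
  have hinter : G.incidenceFinset u ∩ G.incidenceFinset v = {s(u, v)} := by
    apply coe_injective
    push_cast [coe_incidenceFinset]
    exact G.incidenceSet_inter_incidenceSet_of_adj h
  have hmem : s(u, v) ∈ G.incidenceFinset u ∪ G.incidenceFinset v :=
    mem_union_left _ ((G.mem_incidenceFinset _ _).2 ⟨h, Sym2.mem_mk_left u v⟩)
  have hunion := card_union_add_card_inter (G.incidenceFinset u) (G.incidenceFinset v)
  rw [hinter, card_singleton, card_incidenceFinset_eq_degree, card_incidenceFinset_eq_degree] at hunion
  rw [card_erase_of_mem hmem]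
  omega

theorem incidenceFinset_union_erase_subset_uncovered {M₁ M₂ M₃ : Finset (Sym2 V)}
    (h₁ : G.IsPM M₁) (h₂ : G.IsPM M₂) (h₃ : G.IsPM M₃) {u v : V}
    (he : s(u, v) ∈ M₁ ∩ M₂ ∩ M₃) :
    (G.incidenceFinset u ∪ G.incidenceFinset v).erase s(u, v) ⊆
      G.edgeFinset.filter (fun e => e ∉ M₁ ∧ e ∉ M₂ ∧ e ∉ M₃) := by
  simp only [mem_inter] at he
  intro f hf
  obtain ⟨hfe, hf⟩ := mem_erase.1 hf
  obtain ⟨w, hw, hwf, hfE⟩ : ∃ w ∈ s(u, v), w ∈ f ∧ f ∈ G.edgeSet := by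
    rcases mem_union.1 hf with hf | hf <;> rw [mem_incidenceFinset] at hf
    exacts [⟨u, Sym2.mem_mk_left u v, hf.2, hf.1⟩, ⟨v, Sym2.mem_mk_right u v, hf.2, hf.1⟩]
  exact mem_filter.2 ⟨mem_edgeFinset.2 hfE, h₁.notMem_of_mem_of_ne he.1.1 hw hwf hfe,
    h₂.notMem_of_mem_of_ne he.1.2 hw hwf hfe, h₃.notMem_of_mem_of_ne he.2 hw hwf hfe⟩

theorem IsCubic.inter_eq_empty_of_card_uncovered_le_three (hG : G.IsCubic)
    {M₁ M₂ M₃ : Finset (Sym2 V)} (h₁ : G.IsPM M₁) (h₂ : G.IsPM M₂) (h₃ : G.IsPM M₃)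
    (hcard : #(G.edgeFinset.filter (fun e => e ∉ M₁ ∧ e ∉ M₂ ∧ e ∉ M₃)) ≤ 3) :
    M₁ ∩ M₂ ∩ M₃ = ∅ := by
  refine eq_empty_iff_forall_notMem.2 fun e he => ?_
  induction e using Sym2.ind with
  | _ u v =>
  have hadj : G.Adj u v := h₁.1 (mem_inter.1 (mem_inter.1 he).1).1
  have h4 := card_le_card (incidenceFinset_union_erase_subset_uncovered h₁ h₂ h₃ he)
  rw [card_incidenceFinset_union_erase_of_adj hadj, hG u, hG v] at h4
  omega

end SimpleGraph

theorem regDefect_eq_three_iff_defect_eq_three_general {V : Type*} [Fintype V] [DecidableEq V]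
    (G : SimpleGraph V) [DecidableRel G.Adj] (hG : G.IsSnark) :
    G.regDefect = 3 ↔ G.defect = 3 := by
  refine Nat.sInf_eq_iff_sInf_eq_of_subset three_ne_zero ?_ ?_
  · rintro k ⟨M₁, M₂, M₃, h₁, h₂, h₃, -, hk⟩
    exact ⟨M₁, M₂, M₃, h₁, h₂, h₃, hk⟩
  · rintro k ⟨M₁, M₂, M₃, h₁, h₂, h₃, rfl⟩ hk
    exact ⟨M₁, M₂, M₃, h₁, h₂, h₃, hG.1.inter_eq_empty_of_card_uncovered_le_three h₁ h₂ h₃ hk, rfl⟩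

theorem regDefect_eq_three_iff_defect_eq_three {V : Type*} [Fintype V] [DecidableEq V]
    (G : SimpleGraph V) [DecidableRel G.Adj] (hG : G.IsSnark)
    (hreg : ∃ M₁ M₂ M₃ : Finset (Sym2 V),
      G.IsPM M₁ ∧ G.IsPM M₂ ∧ G.IsPM M₃ ∧ M₁ ∩ M₂ ∩ M₃ = ∅) :
    G.regDefect = 3 ↔ G.defect = 3 :=
  regDefect_eq_three_iff_defect_eq_three_general G hG
end

section
/- Let G be a snark admitting a regular 3-array. Then rdf(G) ≥ g/2, where g is the girth of G. -/
/-! Since the three matchings have empty intersection, every edge is covered at most twice, and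
the coverages of the three edges at a vertex sum to 3. Hence each vertex meets either none or
exactly two edges of the core (the edges not covered exactly once), and in the latter case one of
them is uncovered. So the core is a disjoint union of circuits, every vertex of which lies on an
uncovered edge, and a circuit of length `k` forces at least `k / 2` uncovered edges. An optimal
regular array must leave some edge uncovered, since otherwise its matchings would 3-edge-colour
the snark. -/

open Finset

theorem Finset.even_card_filter_ne_one {ι : Type*} {s : Finset ι} {c : ι → ℕ}
    (hc : ∀ i ∈ s, c i ≤ 2) (hsum : ∑ i ∈ s, c i = #s) : Even #{i ∈ s | c i ≠ 1} := by
  have hodd : Even #s ↔ Even #{i ∈ s | Odd (c i)} := hsum ▸ even_sum_iff_even_card_odd c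
  have hfilter : {i ∈ s | c i ≠ 1} = {i ∈ s | ¬Odd (c i)} :=
    filter_congr fun i hi => by have := hc i hi; rw [Nat.odd_iff]; omega
  have hsplit := card_filter_add_card_filter_not (s := s) (fun i => Odd (c i))
  rw [hfilter]
  simp only [Nat.even_iff] at hodd ⊢
  omega

theorem Finset.eq_one_of_sum_eq_card {ι : Type*} {s : Finset ι} {c : ι → ℕ}
    (hc : ∀ i ∈ s, c i ≠ 0) (hsum : ∑ i ∈ s, c i = #s) : ∀ i ∈ s, c i = 1 := by
  rw [card_eq_sum_ones] at hsum
  exact fun i hi =>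
    ((sum_eq_sum_iff_of_le fun i hi => Nat.one_le_iff_ne_zero.mpr (hc i hi)).mp hsum.symm i hi).symm

theorem Finset.card_le_two_mul_card_of_forall_exists_mem {α : Type*} [DecidableEq α]
    {S : Finset α} {U : Finset (Sym2 α)} (h : ∀ v ∈ S, ∃ e ∈ U, v ∈ e) : #S ≤ 2 * #U :=
  calc #S ≤ #(U.biUnion Sym2.toFinset) :=
        card_le_card fun v hv => by
          obtain ⟨e, he, hve⟩ := h v hv
          exact mem_biUnion.mpr ⟨e, he, Sym2.mem_toFinset.mpr hve⟩
    _ ≤ ∑ e ∈ U, #e.toFinset := card_biUnion_le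
    _ ≤ ∑ _e ∈ U, 2 := sum_le_sum fun e _ => by rw [Sym2.card_toFinset]; split_ifs <;> omega
    _ = 2 * #U := by rw [sum_const, smul_eq_mul, mul_comm]

theorem SimpleGraph.Walk.IsCycle.length_eq_card_toFinset_support_tail {V : Type*}
    [DecidableEq V] {G : SimpleGraph V} {u : V} {p : G.Walk u u} (hp : p.IsCycle) :
    p.length = #p.support.tail.toFinset := by
  rw [List.toFinset_card_of_nodup hp.support_nodup, List.length_tail, length_support]
  rfl

def coverage {α : Type*} [DecidableEq α] (M₁ M₂ M₃ : Finset α) (a : α) : ℕ :=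
  (if a ∈ M₁ then 1 else 0) + (if a ∈ M₂ then 1 else 0) + (if a ∈ M₃ then 1 else 0)

section coverage

variable {α : Type*} [DecidableEq α] {M₁ M₂ M₃ : Finset α} {a : α}

theorem coverage_eq_zero_iff : coverage M₁ M₂ M₃ a = 0 ↔ a ∉ M₁ ∧ a ∉ M₂ ∧ a ∉ M₃ := by
  simp [coverage, and_assoc]

theorem coverage_le_two (h : M₁ ∩ M₂ ∩ M₃ = ∅) : coverage M₁ M₂ M₃ a ≤ 2 := by
  have : a ∉ M₁ ∩ M₂ ∩ M₃ := h ▸ Finset.notMem_empty a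
  simp only [Finset.mem_inter, not_and] at this
  unfold coverage
  split_ifs <;> simp_all

end coverage

namespace SimpleGraph

theorem exists_isProper3EdgeColouring {V : Type*} {G : SimpleGraph V}
    {M₁ M₂ M₃ : Finset (Sym2 V)}
    (h₁ : G.IsPM M₁) (h₂ : G.IsPM M₂) (h₃ : G.IsPM M₃)
    (hcov : ∀ e ∈ G.edgeSet, e ∈ M₁ ∨ e ∈ M₂ ∨ e ∈ M₃) :
    ∃ σ : Sym2 V → ZMod 2 × ZMod 2, G.IsProper3EdgeColouring σ := by
  classical
  refine ⟨fun e => if e ∈ M₁ then (1, 0) else if e ∈ M₂ then (0, 1) else (1, 1),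
    fun e _ => by dsimp only; split_ifs <;> decide, ?_⟩
  intro e he f hf hef v hve hvf hσ
  have hne : ∀ {M}, G.IsPM M → e ∈ M → f ∈ M → False := fun hM heM hfM =>
    hef ((hM.2 v).unique ⟨heM, hve⟩ ⟨hfM, hvf⟩)
  dsimp only at hσ
  split_ifs at hσ
  all_goals first
    | exact absurd hσ (by decide)
    | exact hne h₁ ‹_› ‹_›
    | exact hne h₂ ‹_› ‹_›
    | exact hne h₃ (((hcov e he).resolve_left ‹_›).resolve_left ‹_›)
        (((hcov f hf).resolve_left ‹_›).resolve_left ‹_›)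

variable {V : Type*} [DecidableEq V]

def core (G : SimpleGraph V) (M₁ M₂ M₃ : Finset (Sym2 V)) : SimpleGraph V :=
  G.deleteEdges {e | coverage M₁ M₂ M₃ e = 1}

def uncovered (G : SimpleGraph V) [Fintype V] [DecidableRel G.Adj]
    (M₁ M₂ M₃ : Finset (Sym2 V)) : Finset (Sym2 V) :=
  G.edgeFinset.filter (fun e => e ∉ M₁ ∧ e ∉ M₂ ∧ e ∉ M₃)

variable [Fintype V] {G : SimpleGraph V} [DecidableRel G.Adj] {M₁ M₂ M₃ : Finset (Sym2 V)}

theorem exists_card_uncovered_eq_regDefect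
    (h : ∃ M₁ M₂ M₃ : Finset (Sym2 V), G.IsPM M₁ ∧ G.IsPM M₂ ∧ G.IsPM M₃ ∧ M₁ ∩ M₂ ∩ M₃ = ∅) :
    ∃ M₁ M₂ M₃ : Finset (Sym2 V), G.IsPM M₁ ∧ G.IsPM M₂ ∧ G.IsPM M₃ ∧ M₁ ∩ M₂ ∩ M₃ = ∅ ∧
      #(G.uncovered M₁ M₂ M₃) = G.regDefect := by
  obtain ⟨M₁, M₂, M₃, h₁, h₂, h₃, hI⟩ := h
  exact Nat.sInf_mem (s := {k | ∃ M₁ M₂ M₃ : Finset (Sym2 V), G.IsPM M₁ ∧ G.IsPM M₂ ∧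
    G.IsPM M₃ ∧ M₁ ∩ M₂ ∩ M₃ = ∅ ∧ #(G.uncovered M₁ M₂ M₃) = k})
    ⟨_, M₁, M₂, M₃, h₁, h₂, h₃, hI, rfl⟩

theorem mem_uncovered {e : Sym2 V} :
    e ∈ G.uncovered M₁ M₂ M₃ ↔ e ∈ G.edgeSet ∧ coverage M₁ M₂ M₃ e = 0 := by
  rw [uncovered, mem_filter, mem_edgeFinset, coverage_eq_zero_iff]

theorem IsPM.card_filter_neighborFinset_s9 {M : Finset (Sym2 V)} (hM : G.IsPM M) (v : V) :
    #{w ∈ G.neighborFinset v | s(v, w) ∈ M} = 1 := by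
  obtain ⟨e, ⟨heM, hve⟩, huniq⟩ := hM.2 v
  obtain ⟨w, rfl⟩ := Sym2.mem_iff_exists.mp hve
  refine card_eq_one.mpr ⟨w, ext fun z => ?_⟩
  simp only [mem_filter, mem_neighborFinset, mem_singleton]
  refine ⟨fun hz => Sym2.congr_right.mp (huniq _ ⟨hz.2, Sym2.mem_mk_left v z⟩), ?_⟩
  rintro rfl
  exact ⟨hM.1 heM, heM⟩

theorem sum_coverage_neighborFinset (h₁ : G.IsPM M₁) (h₂ : G.IsPM M₂) (h₃ : G.IsPM M₃)
    (v : V) : ∑ w ∈ G.neighborFinset v, coverage M₁ M₂ M₃ s(v, w) = 3 := by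
  simp only [coverage, sum_add_distrib, sum_boole, h₁.card_filter_neighborFinset_s9,
    h₂.card_filter_neighborFinset_s9, h₃.card_filter_neighborFinset_s9, Nat.cast_one, Nat.reduceAdd]

theorem sum_coverage_neighborFinset_eq_card (hcub : G.IsCubic) (h₁ : G.IsPM M₁)
    (h₂ : G.IsPM M₂) (h₃ : G.IsPM M₃) (v : V) :
    ∑ w ∈ G.neighborFinset v, coverage M₁ M₂ M₃ s(v, w) = #(G.neighborFinset v) := by
  rw [sum_coverage_neighborFinset h₁ h₂ h₃, card_neighborFinset_eq_degree, hcub v]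

theorem neighborSet_core (v : V) : (G.core M₁ M₂ M₃).neighborSet v =
    (({w ∈ G.neighborFinset v | coverage M₁ M₂ M₃ s(v, w) ≠ 1} : Finset V) : Set V) := by
  ext w
  simp [core]

theorem isCycles_core (hcub : G.IsCubic) (h₁ : G.IsPM M₁) (h₂ : G.IsPM M₂) (h₃ : G.IsPM M₃)
    (hI : M₁ ∩ M₂ ∩ M₃ = ∅) : (G.core M₁ M₂ M₃).IsCycles := by
  intro v hv
  rw [neighborSet_core, coe_nonempty, ← card_pos] at hv
  rw [neighborSet_core, Set.ncard_coe_finset]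
  obtain ⟨k, hk⟩ := even_card_filter_ne_one (fun _ _ => coverage_le_two hI)
    (sum_coverage_neighborFinset_eq_card hcub h₁ h₂ h₃ v)
  have hle : #{w ∈ G.neighborFinset v | coverage M₁ M₂ M₃ s(v, w) ≠ 1} ≤ 3 :=
    (card_filter_le _ _).trans (card_neighborFinset_eq_degree G v ▸ (hcub v).le)
  omega

theorem exists_coverage_eq_zero_of_core_adj (hcub : G.IsCubic) (h₁ : G.IsPM M₁)
    (h₂ : G.IsPM M₂) (h₃ : G.IsPM M₃) {v w : V} (h : (G.core M₁ M₂ M₃).Adj v w) :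
    ∃ u, G.Adj v u ∧ coverage M₁ M₂ M₃ s(v, u) = 0 := by
  by_contra! h0
  rw [core, deleteEdges_adj] at h
  exact h.2 (eq_one_of_sum_eq_card (fun u hu => h0 u ((mem_neighborFinset _ _ _).mp hu))
    (sum_coverage_neighborFinset_eq_card hcub h₁ h₂ h₃ v) w ((mem_neighborFinset _ _ _).mpr h.1))

theorem girth_le_two_mul_card_uncovered (hcub : G.IsCubic) (h₁ : G.IsPM M₁) (h₂ : G.IsPM M₂)
    (h₃ : G.IsPM M₃) (hI : M₁ ∩ M₂ ∩ M₃ = ∅) {e : Sym2 V}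
    (he : e ∈ G.uncovered M₁ M₂ M₃) :
    G.girth ≤ 2 * #(G.uncovered M₁ M₂ M₃) := by
  induction e with | h a b => ?_
  rw [mem_uncovered, mem_edgeSet] at he
  have hab : (G.core M₁ M₂ M₃).Adj a b := deleteEdges_adj.mpr ⟨he.1, by simp [he.2]⟩
  obtain ⟨u, p, hp, -⟩ := adj_and_reachable_delete_edges_iff_exists_cycle.mp
    ⟨hab, (isCycles_core hcub h₁ h₂ h₃ hI).reachable_deleteEdges hab⟩
  have huncovered : ∀ v ∈ p.support.tail.toFinset, ∃ e ∈ G.uncovered M₁ M₂ M₃, v ∈ e := by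
    intro v hv
    rw [List.mem_toFinset, ← p.map_snd_darts] at hv
    obtain ⟨d, -, rfl⟩ := List.mem_map.mp hv
    obtain ⟨w, hw, hw0⟩ := exists_coverage_eq_zero_of_core_adj hcub h₁ h₂ h₃ d.adj.symm
    exact ⟨s(d.snd, w), mem_uncovered.mpr ⟨hw, hw0⟩, Sym2.mem_mk_left _ _⟩
  calc G.girth ≤ p.length :=
        (girth_le_length (hp.mapLe (deleteEdges_le _))).trans_eq (p.length_mapLe _)
    _ = #p.support.tail.toFinset := hp.length_eq_card_toFinset_support_tail
    _ ≤ _ := card_le_two_mul_card_of_forall_exists_mem huncovered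

end SimpleGraph

/-- The regular defect of a snark is at least half its girth. -/
theorem regDefect_ge_half_girth {V : Type*} [Fintype V] [DecidableEq V]
    (G : SimpleGraph V) [DecidableRel G.Adj] (hG : G.IsSnark)
    (hreg : ∃ M₁ M₂ M₃ : Finset (Sym2 V),
      G.IsPM M₁ ∧ G.IsPM M₂ ∧ G.IsPM M₃ ∧ M₁ ∩ M₂ ∩ M₃ = ∅) :
    G.girth ≤ 2 * (G.regDefect : ℕ∞) := by
  obtain ⟨M₁, M₂, M₃, h₁, h₂, h₃, hI, hcard⟩ := G.exists_card_uncovered_eq_regDefect hreg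
  obtain ⟨e, he⟩ : (G.uncovered M₁ M₂ M₃).Nonempty := by
    by_contra! hempty
    refine hG.2.2 (G.exists_isProper3EdgeColouring h₁ h₂ h₃ fun e he => ?_)
    by_contra! hunc
    simpa [hempty] using SimpleGraph.mem_uncovered.mpr ⟨he, coverage_eq_zero_iff.mpr hunc⟩
  rw [← hcard]
  exact_mod_cast G.girth_le_two_mul_card_uncovered hG.1 h₁ h₂ h₃ hI he
end

section
/- If a bridgeless cubic graph G has a Fulkerson cover, then G admits two complementary regular 3-arrays: three perfect matchings {M₁, M₂, M₃} and three perfect matchings {M₄, M₅, M₆}, each triple with empty intersection, having the same core, such that the set of edges uncovered by the first triple equals the set of edges doubly covered by the second triple and vice versa. -/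
/-!
Split the Fulkerson cover into its first and last three matchings. Since every edge lies in
exactly two of the six, the coverage numbers of the two halves add up to 2 on every edge;
this rules out an edge covered three times by one half, and makes an edge uncovered by one
half exactly an edge doubly covered by the other.
-/

open Finset

theorem SimpleGraph.IsPM.mem_edgeFinset {V : Type*} [Fintype V] {G : SimpleGraph V}
    [DecidableRel G.Adj] {M : Finset (Sym2 V)} (hM : G.IsPM M) {e : Sym2 V} (he : e ∈ M) :
    e ∈ G.edgeFinset :=
  SimpleGraph.mem_edgeFinset.2 (hM.1 he)

section cov

variable {V : Type*} [DecidableEq V]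

theorem cov_add_cov_eq_card_filter (M : Fin 6 → Finset (Sym2 V)) (e : Sym2 V) :
    cov (M 0) (M 1) (M 2) e + cov (M 3) (M 4) (M 5) e = #{i | e ∈ M i} := by
  rw [card_filter, Fin.sum_univ_six]
  simp only [cov]
  ring

theorem inter_inter_eq_empty_of_cov_le_two {M₁ M₂ M₃ : Finset (Sym2 V)}
    (h : ∀ e ∈ M₁, cov M₁ M₂ M₃ e ≤ 2) : M₁ ∩ M₂ ∩ M₃ = ∅ := by
  ext e
  simp only [mem_inter, notMem_empty, iff_false, not_and]
  intro ⟨h₁, h₂⟩ h₃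
  simpa [cov, h₁, h₂, h₃] using h e h₁

end cov

theorem fulkerson_cover_gives_complementary_arrays_general {V : Type*} [Fintype V]
    [DecidableEq V] (G : SimpleGraph V) [DecidableRel G.Adj]
    (M : Fin 6 → Finset (Sym2 V)) (hM : ∀ i, G.IsPM (M i))
    (hcover : ∀ e ∈ G.edgeFinset, (Finset.univ.filter (fun i => e ∈ M i)).card = 2) :
    ∃ N₁ N₂ N₃ N₄ N₅ N₆ : Finset (Sym2 V),
      G.IsPM N₁ ∧ G.IsPM N₂ ∧ G.IsPM N₃ ∧ G.IsPM N₄ ∧ G.IsPM N₅ ∧ G.IsPM N₆ ∧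
      N₁ ∩ N₂ ∩ N₃ = ∅ ∧ N₄ ∩ N₅ ∩ N₆ = ∅ ∧
      (∀ e ∈ G.edgeFinset, (cov N₁ N₂ N₃ e ≠ 1 ↔ cov N₄ N₅ N₆ e ≠ 1)) ∧
      (∀ e ∈ G.edgeFinset, (cov N₁ N₂ N₃ e = 0 ↔ cov N₄ N₅ N₆ e = 2)) ∧
      (∀ e ∈ G.edgeFinset, (cov N₁ N₂ N₃ e = 2 ↔ cov N₄ N₅ N₆ e = 0)) := by
  have hsum : ∀ e ∈ G.edgeFinset, cov (M 0) (M 1) (M 2) e + cov (M 3) (M 4) (M 5) e = 2 :=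
    fun e he => (cov_add_cov_eq_card_filter M e).trans (hcover e he)
  refine ⟨M 0, M 1, M 2, M 3, M 4, M 5, hM 0, hM 1, hM 2, hM 3, hM 4, hM 5,
    inter_inter_eq_empty_of_cov_le_two fun e he => ?_,
    inter_inter_eq_empty_of_cov_le_two fun e he => ?_,
    fun e he => ?_, fun e he => ?_, fun e he => ?_⟩
  · have := hsum e ((hM 0).mem_edgeFinset he); omega
  · have := hsum e ((hM 3).mem_edgeFinset he); omega
  all_goals have := hsum e he; omega

/-- If a bridgeless cubic graph has a Fulkerson cover (six perfect matchings, with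
multiplicity, covering each edge exactly twice), then it admits two complementary
regular 3-arrays: two triples of perfect matchings, each with empty intersection,
with the same core, the uncovered edges of one being the doubly covered edges of
the other and vice versa. -/
theorem fulkerson_cover_gives_complementary_arrays {V : Type*} [Fintype V]
    [DecidableEq V] (G : SimpleGraph V) [DecidableRel G.Adj] (hG : G.IsCubic)
    (hbridge : ∀ e ∈ G.edgeSet, ¬ G.IsBridge e)
    (M : Fin 6 → Finset (Sym2 V)) (hM : ∀ i, G.IsPM (M i))
    (hcover : ∀ e ∈ G.edgeFinset, (Finset.univ.filter (fun i => e ∈ M i)).card = 2) :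
    ∃ N₁ N₂ N₃ N₄ N₅ N₆ : Finset (Sym2 V),
      G.IsPM N₁ ∧ G.IsPM N₂ ∧ G.IsPM N₃ ∧ G.IsPM N₄ ∧ G.IsPM N₅ ∧ G.IsPM N₆ ∧
      N₁ ∩ N₂ ∩ N₃ = ∅ ∧ N₄ ∩ N₅ ∩ N₆ = ∅ ∧
      (∀ e ∈ G.edgeFinset, (cov N₁ N₂ N₃ e ≠ 1 ↔ cov N₄ N₅ N₆ e ≠ 1)) ∧
      (∀ e ∈ G.edgeFinset, (cov N₁ N₂ N₃ e = 0 ↔ cov N₄ N₅ N₆ e = 2)) ∧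
      (∀ e ∈ G.edgeFinset, (cov N₁ N₂ N₃ e = 2 ↔ cov N₄ N₅ N₆ e = 0)) :=
  fulkerson_cover_gives_complementary_arrays_general G M hM hcover
end

section
/- Let G be a bridgeless cubic graph containing two disjoint matchings P₁ and P₂ such that P₁ ∪ P₂ is a disjoint union of circuits of G and both G − P₁ and G − P₂ admit nowhere-zero Z₂×Z₂-flows. Then G has a Fulkerson cover: six perfect matchings such that each edge of G belongs to exactly two of them. -/
open Finset

/-- A nowhere-zero `Z₂×Z₂`-flow on the spanning subgraph of `G` with edge set
`G.edgeFinset \ P`. -/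
def HasNZFlowOff {V : Type*} [Fintype V] [DecidableEq V] (G : SimpleGraph V)
    [DecidableRel G.Adj] (P : Finset (Sym2 V)) : Prop :=
  ∃ φ : Sym2 V → ZMod 2 × ZMod 2,
    (∀ e ∈ G.edgeFinset \ P, φ e ≠ 0) ∧
    ∀ v : V, ∑ e ∈ (G.edgeFinset \ P).filter (fun e => v ∈ e), φ e = 0

/-!
Let `φ` be a nowhere-zero `Z₂ × Z₂`-flow on `G - P` and `x ≠ 0`. The edges `e ∉ P` with
`φ e = x` off `P'` and `φ e ≠ x` on `P'` form a perfect matching: at a vertex missing `P ∪ P'`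
the three flow values are the three nonzero elements, while at a vertex of the circuits `P ∪ P'`
the two edges of `G - P` (one of them in `P'`) carry the same value. As `x` ranges over the
nonzero elements these three matchings cover every edge outside `P ∪ P'` once, every edge of
`P'` twice and no edge of `P`; taking them for `(P₁, P₂, φ₁)` and for `(P₂, P₁, φ₂)` gives six
perfect matchings covering each edge exactly twice.
-/

namespace Klein

def nonzero : Fin 3 → ZMod 2 × ZMod 2 := ![(1, 0), (0, 1), (1, 1)]

lemma nonzero_ne_zero (i : Fin 3) : nonzero i ≠ 0 := by
  revert i; decide

lemma card_filter_eq_nonzero (y : ZMod 2 × ZMod 2) (hy : y ≠ 0) :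
    #{i | y = nonzero i} = 1 := by
  revert y; decide

lemma card_filter_ne_nonzero (y : ZMod 2 × ZMod 2) (hy : y ≠ 0) :
    #{i | y ≠ nonzero i} = 2 := by
  revert y; decide

lemma eq_of_add_eq_zero {a b : ZMod 2 × ZMod 2} (h : a + b = 0) : a = b := by
  revert a b; decide

lemma card_filter_eq_one_of_sum_eq_zero {α : Type*} [DecidableEq α] {s : Finset α}
    {φ : α → ZMod 2 × ZMod 2}
    (hs : #s = 3) (hφ : ∀ e ∈ s, φ e ≠ 0) (hsum : ∑ e ∈ s, φ e = 0)
    (x : ZMod 2 × ZMod 2) (hx : x ≠ 0) : #{e ∈ s | φ e = x} = 1 := by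
  obtain ⟨a, b, c, hab, hac, hbc, rfl⟩ := card_eq_three.mp hs
  simp only [mem_insert, mem_singleton, forall_eq_or_imp, forall_eq] at hφ
  rw [sum_insert (by simp [hab, hac]), sum_pair hbc] at hsum
  rw [card_filter, sum_insert (by simp [hab, hac]), sum_pair hbc]
  have key : ∀ A B C : ZMod 2 × ZMod 2, A ≠ 0 ∧ B ≠ 0 ∧ C ≠ 0 ∧ A + (B + C) = 0 →
      ((if A = x then 1 else 0) + ((if B = x then 1 else 0) + if C = x then 1 else 0) : ℕ) = 1 := by
    revert x; decide
  exact key _ _ _ ⟨hφ.1, hφ.2.1, hφ.2.2, hsum⟩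

end Klein

lemma Fin.card_filter_append {α : Type*} {m n : ℕ} (u : Fin m → α) (w : Fin n → α)
    (p : α → Prop) [DecidablePred p] :
    #{i | p (Fin.append u w i)} = #{i | p (u i)} + #{i | p (w i)} := by
  simp only [card_filter, Fin.sum_univ_add, Fin.append_left, Fin.append_right]

namespace SimpleGraph

variable {V : Type*} [Fintype V] [DecidableEq V] (G : SimpleGraph V) [DecidableRel G.Adj]

def flowMatching (P P' : Finset (Sym2 V)) (φ : Sym2 V → ZMod 2 × ZMod 2)
    (x : ZMod 2 × ZMod 2) : Finset (Sym2 V) :=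
  {e ∈ G.edgeFinset | e ∉ P ∧ (φ e = x ↔ e ∉ P')}

variable {G} {P P' : Finset (Sym2 V)} {φ : Sym2 V → ZMod 2 × ZMod 2} {x : ZMod 2 × ZMod 2}

lemma card_mem_flowMatching (hφ : ∀ e ∈ G.edgeFinset \ P, φ e ≠ 0)
    {e : Sym2 V} (he : e ∈ G.edgeFinset) :
    #{i | e ∈ G.flowMatching P P' φ (Klein.nonzero i)} =
      if e ∈ P then 0 else if e ∈ P' then 2 else 1 := by
  by_cases heP : e ∈ P
  · simp [flowMatching, heP]
  have hφe : φ e ≠ 0 := hφ e (mem_sdiff.mpr ⟨he, heP⟩)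
  by_cases heP' : e ∈ P'
  · simpa [flowMatching, he, heP, heP'] using Klein.card_filter_ne_nonzero _ hφe
  · simpa [flowMatching, he, heP, heP'] using Klein.card_filter_eq_nonzero _ hφe

lemma card_incident_sdiff_add_card_incident (hG : G.IsCubic) (hP : P ⊆ G.edgeFinset) (v : V) :
    #{e ∈ G.edgeFinset \ P | v ∈ e} + #{e ∈ P | v ∈ e} = 3 := by
  have hsplit : {e ∈ G.edgeFinset \ P | v ∈ e} = G.incidenceFinset v \ {e ∈ P | v ∈ e} := by
    ext e
    simp only [mem_filter, mem_sdiff, mem_edgeFinset, incidenceFinset_eq_filter, not_and]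
    tauto
  rw [hsplit, card_sdiff_add_card_eq_card, card_incidenceFinset_eq_degree, hG v]
  intro e he
  rw [mem_filter] at he
  simp [incidenceFinset_eq_filter, hP he.1, he.2]

lemma incident_flowMatching (v : V) :
    {e ∈ G.flowMatching P P' φ x | v ∈ e} =
      {e ∈ {e ∈ G.edgeFinset \ P | v ∈ e} | φ e = x ↔ e ∉ P'} := by
  ext e
  simp only [flowMatching, mem_filter, mem_edgeFinset, mem_sdiff]
  tauto

lemma card_incident_flowMatching_of_card_eq_zero (hG : G.IsCubic) (hP : P ⊆ G.edgeFinset)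
    (hφ : ∀ e ∈ G.edgeFinset \ P, φ e ≠ 0) {v : V}
    (hflow : ∑ e ∈ {e ∈ G.edgeFinset \ P | v ∈ e}, φ e = 0)
    (hv : #{e ∈ P ∪ P' | v ∈ e} = 0) (hx : x ≠ 0) :
    #{e ∈ G.flowMatching P P' φ x | v ∈ e} = 1 := by
  rw [card_eq_zero, filter_union, union_eq_empty] at hv
  have hP'v : ∀ e, v ∈ e → e ∉ P' := fun e hve heP' => filter_eq_empty_iff.mp hv.2 heP' hve
  have hcard := card_incident_sdiff_add_card_incident hG hP v
  rw [hv.1, card_empty, add_zero] at hcard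
  rw [incident_flowMatching,
    filter_congr (q := (φ · = x)) fun e he => by simp [hP'v e (mem_filter.mp he).2]]
  exact Klein.card_filter_eq_one_of_sum_eq_zero hcard
    (fun e he => hφ e (mem_filter.mp he).1) hflow x hx

lemma card_incident_flowMatching_of_card_eq_one (hG : G.IsCubic) (hP : P ⊆ G.edgeFinset)
    (hP' : P' ⊆ G.edgeFinset) (hd : Disjoint P P') {v : V}
    (hflow : ∑ e ∈ {e ∈ G.edgeFinset \ P | v ∈ e}, φ e = 0)
    (hvP : #{e ∈ P | v ∈ e} = 1) (hvP' : #{e ∈ P' | v ∈ e} = 1) :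
    #{e ∈ G.flowMatching P P' φ x | v ∈ e} = 1 := by
  have hcard := card_incident_sdiff_add_card_incident hG hP v
  rw [incident_flowMatching]
  set S := {e ∈ G.edgeFinset \ P | v ∈ e}
  have hS : #S = 2 := by omega
  obtain ⟨p', hp'⟩ := card_eq_one.mp hvP'
  have hp'P' : p' ∈ P' ∧ v ∈ p' := mem_filter.mp (hp' ▸ mem_singleton_self p')
  have hp'S : p' ∈ S := mem_filter.mpr
    ⟨mem_sdiff.mpr ⟨hP' hp'P'.1, disjoint_right.mp hd hp'P'.1⟩, hp'P'.2⟩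
  obtain ⟨f, hf⟩ := card_eq_one.mp (by rw [card_erase_of_mem hp'S, hS] : #(S.erase p') = 1)
  have hfS : f ∈ S.erase p' := hf ▸ mem_singleton_self f
  have hfp' : f ≠ p' := ne_of_mem_erase hfS
  have hfP' : f ∉ P' := fun hfP' => hfp' <| mem_singleton.mp <|
    hp' ▸ mem_filter.mpr ⟨hfP', (mem_filter.mp (mem_of_mem_erase hfS)).2⟩
  have hSpair : S = {p', f} := by rw [← insert_erase hp'S, hf]
  have hφ : φ p' = φ f := by
    rw [hSpair, sum_pair hfp'.symm] at hflow
    exact Klein.eq_of_add_eq_zero hflow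
  rw [hSpair, card_filter, sum_pair hfp'.symm]
  by_cases hfx : φ f = x <;> simp [hp'P'.1, hfP', hφ, hfx]

lemma isPM_flowMatching (hG : G.IsCubic) (hP : P ⊆ G.edgeFinset) (hP' : P' ⊆ G.edgeFinset)
    (hd : Disjoint P P') (hm : ∀ v, #{e ∈ P | v ∈ e} ≤ 1) (hm' : ∀ v, #{e ∈ P' | v ∈ e} ≤ 1)
    (hcirc : ∀ v, #{e ∈ P ∪ P' | v ∈ e} = 0 ∨ #{e ∈ P ∪ P' | v ∈ e} = 2)
    (hφ : ∀ e ∈ G.edgeFinset \ P, φ e ≠ 0)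
    (hflow : ∀ v, ∑ e ∈ {e ∈ G.edgeFinset \ P | v ∈ e}, φ e = 0) (hx : x ≠ 0) :
    G.IsPM (G.flowMatching P P' φ x) := by
  refine ⟨fun e he => mem_edgeFinset.mp (mem_filter.mp he).1, fun v => ?_⟩
  have hone : #{e ∈ G.flowMatching P P' φ x | v ∈ e} = 1 := by
    rcases hcirc v with hv | hv
    · exact card_incident_flowMatching_of_card_eq_zero hG hP hφ (hflow v) hv hx
    · rw [filter_union, card_union_of_disjoint (disjoint_filter_filter hd)] at hv
      have := hm v
      have := hm' v
      exact card_incident_flowMatching_of_card_eq_one hG hP hP' hd (hflow v) (by omega) (by omega)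
  simpa only [card_eq_one_iff_existsUnique, mem_filter] using hone

end SimpleGraph

theorem flows_give_fulkerson_cover_general {V : Type*} [Fintype V] [DecidableEq V]
    (G : SimpleGraph V) [DecidableRel G.Adj] (hG : G.IsCubic)
    (P₁ P₂ : Finset (Sym2 V)) (hP₁ : P₁ ⊆ G.edgeFinset) (hP₂ : P₂ ⊆ G.edgeFinset)
    (hdisj : P₁ ∩ P₂ = ∅)
    (hm₁ : ∀ v : V, (P₁.filter (fun e => v ∈ e)).card ≤ 1)
    (hm₂ : ∀ v : V, (P₂.filter (fun e => v ∈ e)).card ≤ 1)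
    (hcirc : ∀ v : V, ((P₁ ∪ P₂).filter (fun e => v ∈ e)).card = 0 ∨
      ((P₁ ∪ P₂).filter (fun e => v ∈ e)).card = 2)
    (hf₁ : HasNZFlowOff G P₁) (hf₂ : HasNZFlowOff G P₂) :
    ∃ M : Fin 6 → Finset (Sym2 V), (∀ i, G.IsPM (M i)) ∧
      ∀ e ∈ G.edgeFinset, (Finset.univ.filter (fun i => e ∈ M i)).card = 2 := by
  obtain ⟨φ₁, hφ₁, hflow₁⟩ := hf₁
  obtain ⟨φ₂, hφ₂, hflow₂⟩ := hf₂
  have hd : Disjoint P₁ P₂ := disjoint_iff_inter_eq_empty.mpr hdisj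
  have hcirc' : ∀ v, #{e ∈ P₂ ∪ P₁ | v ∈ e} = 0 ∨ #{e ∈ P₂ ∪ P₁ | v ∈ e} = 2 := by
    simpa only [union_comm P₁] using hcirc
  suffices ∃ M : Fin (3 + 3) → Finset (Sym2 V), (∀ i, G.IsPM (M i)) ∧
      ∀ e ∈ G.edgeFinset, #{i | e ∈ M i} = 2 from this
  refine ⟨Fin.append (fun i => G.flowMatching P₁ P₂ φ₁ (Klein.nonzero i))
    (fun i => G.flowMatching P₂ P₁ φ₂ (Klein.nonzero i)), fun i => ?_, fun e he => ?_⟩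
  · refine Fin.addCases (fun i => ?_) (fun i => ?_) i
    · rw [Fin.append_left]
      exact SimpleGraph.isPM_flowMatching hG hP₁ hP₂ hd hm₁ hm₂ hcirc hφ₁ hflow₁
        (Klein.nonzero_ne_zero i)
    · rw [Fin.append_right]
      exact SimpleGraph.isPM_flowMatching hG hP₂ hP₁ hd.symm hm₂ hm₁ hcirc' hφ₂ hflow₂
        (Klein.nonzero_ne_zero i)
  · rw [Fin.card_filter_append _ _ (e ∈ ·), SimpleGraph.card_mem_flowMatching hφ₁ he,
      SimpleGraph.card_mem_flowMatching hφ₂ he]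
    have : e ∈ P₁ → e ∉ P₂ := fun h => disjoint_left.mp hd h
    split_ifs <;> tauto

/-- If a bridgeless cubic graph contains two disjoint matchings `P₁, P₂` whose union
is a disjoint union of circuits, such that `G − P₁` and `G − P₂` admit nowhere-zero
`Z₂×Z₂`-flows, then `G` has a Fulkerson cover. -/
theorem flows_give_fulkerson_cover {V : Type*} [Fintype V] [DecidableEq V]
    (G : SimpleGraph V) [DecidableRel G.Adj] (hG : G.IsCubic)
    (hbridge : ∀ e ∈ G.edgeSet, ¬ G.IsBridge e)
    (P₁ P₂ : Finset (Sym2 V)) (hP₁ : P₁ ⊆ G.edgeFinset) (hP₂ : P₂ ⊆ G.edgeFinset)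
    (hdisj : P₁ ∩ P₂ = ∅)
    (hm₁ : ∀ v : V, (P₁.filter (fun e => v ∈ e)).card ≤ 1)
    (hm₂ : ∀ v : V, (P₂.filter (fun e => v ∈ e)).card ≤ 1)
    (hcirc : ∀ v : V, ((P₁ ∪ P₂).filter (fun e => v ∈ e)).card = 0 ∨
      ((P₁ ∪ P₂).filter (fun e => v ∈ e)).card = 2)
    (hf₁ : HasNZFlowOff G P₁) (hf₂ : HasNZFlowOff G P₂) :
    ∃ M : Fin 6 → Finset (Sym2 V), (∀ i, G.IsPM (M i)) ∧
      ∀ e ∈ G.edgeFinset, (Finset.univ.filter (fun i => e ∈ M i)).card = 2 :=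
  flows_give_fulkerson_cover_general G hG P₁ P₂ hP₁ hP₂ hdisj hm₁ hm₂ hcirc hf₁ hf₂
end
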